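/- In any weighted-k-atomic valid total order for the bin-packing reduction instance, any long write placed between w(i) and r(i-1) (for 2 ≤ i ≤ m) can be moved to between r(i-1) and w(i+1), and the resulting total order is still valid and weighted-k-atomic. -/

import Mathlib

open scoped Classical

/-- An operation in a weighted history: start/finish times (rational), type,
value, and a weight (relevant for writes). -/
structure WOp where
  s : ℚ
  f : ℚ
  isRead : Bool
  val : ℕ
  wt : ℕ
deriving DecidableEq

/-- `a` occurs before `b` in the total order represented by the list `l`. -/
def WBefore (l : List WOp) (a b : WOp) : Prop :=
  ∃ l1 l2 l3, l = l1 ++ a :: l2 ++ b :: l3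

/-- A total order is valid if it respects real-time precedence. -/
def WValid (l : List WOp) : Prop :=
  ∀ a ∈ l, ∀ b ∈ l, a.f < b.s → WBefore l a b

/-- In the total order `l`, every read follows its dictating write, and the total
weight of the writes ordered at or after the dictating write and before the read
(including the dictating write itself) is at most `k`. -/
def WKAtomicOrder (k : ℕ) (l : List WOp) : Prop :=
  ∀ r ∈ l, r.isRead = true → ∀ w ∈ l, w.isRead = false → w.val = r.val →
    ∃ l1 l2 l3, l = l1 ++ w :: l2 ++ r :: l3 ∧
      w.wt + ((l2.filter (fun op => op.isRead = false)).map WOp.wt).sum ≤ k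

/-- A weighted history (given as a list of operations) is weighted-`k`-atomic if
some valid total order of its operations satisfies the weighted separation bound. -/
def WeightedKAtomic (k : ℕ) (H : List WOp) : Prop :=
  ∃ l : List WOp, l.Perm H ∧ WValid l ∧ WKAtomicOrder k l

/-- Well-formedness of a weighted history. -/
def WWf (H : List WOp) : Prop :=
  H.Nodup ∧
  (∀ op ∈ H, op.s < op.f) ∧
  (∀ op1 ∈ H, ∀ op2 ∈ H, op1 ≠ op2 → op1.s ≠ op2.s ∧ op1.f ≠ op2.f ∧ op1.s ≠ op2.f) ∧
  (∀ w1 ∈ H, ∀ w2 ∈ H, w1.isRead = false → w2.isRead = false → w1.val = w2.val → w1 = w2) ∧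
  (∀ w ∈ H, w.isRead = false → 0 < w.wt) ∧
  (∀ r ∈ H, r.isRead = true → ∃ w ∈ H, w.isRead = false ∧ w.val = r.val ∧ w.f < r.s)

/-- Bin packing: `n` items with sizes `sz` can be partitioned into `m` bins each
of total size at most `B`. -/
def BinPackingSolvable (n m B : ℕ) (sz : Fin n → ℕ) : Prop :=
  ∃ assign : Fin n → Fin m, ∀ b : Fin m,
    ∑ i ∈ Finset.univ.filter (fun i => assign i = b), sz i ≤ B

/-- The `i`-th short write `w(i)` (weight 1). -/
def shortW (i : ℕ) : WOp := ⟨3 * i, 3 * i + 1, false, i, 1⟩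

/-- The `i`-th read `r(i)`, a dictated read of `w(i)`, positioned after `w(i+1)`
and before `w(i+2)`. -/
def readOp (i : ℕ) : WOp := ⟨3 * i + 4 + 1/4, 3 * i + 5 + 1/2, true, i, 1⟩

/-- The `j`-th long write, with weight `sz j` and no dictated reads, forced after
`w(1)` and before `w(m+1)` but concurrent with everything in between. -/
def longW (n m : ℕ) (sz : Fin n → ℕ) (j : Fin n) : WOp :=
  ⟨4 + ((j : ℚ) + 1) / (2 * n + 5), 3 * m + 3 - ((j : ℚ) + 1) / (2 * n + 5),
    false, m + 2 + j, sz j⟩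

/-- The weighted history constructed from a bin-packing instance: short writes
`w(1), …, w(m+1)`, reads `r(1), …, r(m)`, and `n` long writes. -/
def reduction (n m : ℕ) (sz : Fin n → ℕ) : List WOp :=
  ((List.range' 1 (m + 1)).map shortW) ++ ((List.range' 1 m).map readOp) ++
    ((List.finRange n).map (longW n m sz))

/-! Moving the long write `L` to just after `r(i-1)` only changes the relative order of `L` and
the operations `M` it jumps over, those after `L` up to and including `r(i-1)`. Every operation of
`M` starts before `L` finishes (otherwise it would have to follow `r(i-1)`, which finishes before
`L` does), so validity is kept. The write-weight between a write and its read can only grow, by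
the weight of `L`, when the write lies in `M` and the read after `r(i-1)`. In the reduction that
would be a pattern `w(i) < L < w(t) < r(i-1) < r(t)`, and the real-time constraints rule it out
for every `t`. -/

open List

theorem notMem_of_nodup_middle {α : Type*} {A B : List α} {x : α} (hnd : (A ++ x :: B).Nodup) :
    x ∉ A ∧ x ∉ B := by
  simpa using (nodup_cons.1 (nodup_middle.1 hnd)).1

def writeWeight (Q : List WOp) : ℕ := ((Q.filter (fun op => op.isRead = false)).map WOp.wt).sum

theorem writeWeight_le_of_subperm {Q Q' : List WOp} (h : Q' <+~ Q) :
    writeWeight Q' ≤ writeWeight Q := by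
  obtain ⟨L, hp, hs⟩ := h
  rw [writeWeight, ← ((hp.filter _).map _).sum_eq]
  exact ((hs.filter _).map _).sum_le_sum fun _ _ => Nat.zero_le _

section Order

variable {l A B P Q R : List WOp} {a b c x : WOp}

theorem wBefore_iff_exists_append : WBefore l a b ↔ ∃ A B, l = A ++ B ∧ a ∈ A ∧ b ∈ B := by
  constructor
  · rintro ⟨l1, l2, l3, rfl⟩
    exact ⟨l1 ++ [a], l2 ++ b :: l3, by simp, by simp, by simp⟩
  · rintro ⟨A, B, rfl, ha, hb⟩
    obtain ⟨A1, A2, rfl⟩ := append_of_mem ha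
    obtain ⟨B1, B2, rfl⟩ := append_of_mem hb
    exact ⟨A1, A2 ++ B1, B2, by simp⟩

theorem wBefore_iff_sublist : WBefore l a b ↔ [a, b] <+ l := by
  rw [wBefore_iff_exists_append, cons_sublist_iff]
  simp only [singleton_sublist]

theorem wBefore_append_of_mem_of_mem (ha : a ∈ A) (hb : b ∈ B) : WBefore (A ++ B) a b :=
  wBefore_iff_exists_append.2 ⟨A, B, rfl, ha, hb⟩

theorem WBefore.mem_left (h : WBefore l a b) : a ∈ l := by
  obtain ⟨A, B, rfl, ha, -⟩ := wBefore_iff_exists_append.1 h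
  exact mem_append_left B ha

theorem WBefore.mem_right (h : WBefore l a b) : b ∈ l := by
  obtain ⟨A, B, rfl, -, hb⟩ := wBefore_iff_exists_append.1 h
  exact mem_append_right A hb

theorem wBefore_erase_iff (ha : a ≠ x) (hb : b ≠ x) :
    WBefore (l.erase x) a b ↔ WBefore l a b := by
  simp only [wBefore_iff_sublist]
  refine ⟨fun h => h.trans erase_sublist, fun h => ?_⟩
  simpa [erase_of_not_mem, ha.symm, hb.symm] using h.erase x

theorem wBefore_middle_left_iff (hnd : (A ++ x :: B).Nodup) :
    WBefore (A ++ x :: B) a x ↔ a ∈ A := by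
  refine ⟨fun ⟨P, Q, R, h⟩ => ?_, fun ha => ?_⟩
  · obtain ⟨rfl, -⟩ := (append_cons_inj_of_notMem (notMem_of_nodup_middle hnd).1
      (notMem_of_nodup_middle hnd).2).1 h
    simp
  · simpa using wBefore_append_of_mem_of_mem (B := x :: B) ha mem_cons_self

theorem wBefore_middle_right_iff (hnd : (A ++ x :: B).Nodup) :
    WBefore (A ++ x :: B) x b ↔ b ∈ B := by
  refine ⟨fun ⟨P, Q, R, h⟩ => ?_, fun hb => ?_⟩
  · rw [append_assoc, cons_append] at h
    obtain ⟨-, -, rfl⟩ := (append_cons_inj_of_notMem (notMem_of_nodup_middle hnd).1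
      (notMem_of_nodup_middle hnd).2).1 h
    simp
  · simpa using wBefore_append_of_mem_of_mem (A := A ++ [x]) (by simp) hb

theorem WBefore.not_wBefore (hnd : l.Nodup) (h : WBefore l a b) : ¬WBefore l b a := by
  obtain ⟨P, Q, R, rfl⟩ := h
  rw [append_assoc, cons_append] at hnd ⊢
  intro h'
  have hbP : b ∈ P := (wBefore_middle_left_iff hnd).1 h'
  exact (nodup_append.1 hnd).2.2 b hbP b (by simp) rfl

theorem mem_between_iff (hnd : l.Nodup) (hl : l = P ++ a :: Q ++ b :: R) :
    c ∈ Q ↔ WBefore l a c ∧ WBefore l c b := by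
  have hl₁ : l = P ++ a :: (Q ++ b :: R) := by simp [hl]
  have hnd₁ := hl₁ ▸ hnd
  have hnd₂ := hl ▸ hnd
  rw [hl₁, wBefore_middle_right_iff hnd₁, ← hl₁, hl, wBefore_middle_left_iff hnd₂]
  refine ⟨fun hc => ⟨by simp [hc], by simp [hc]⟩, fun ⟨hc₁, hc₂⟩ => ?_⟩
  rcases mem_append.1 hc₁ with hcQ | hcbR
  · exact hcQ
  · exact absurd rfl ((nodup_append.1 hnd₂).2.2 c hc₂ c hcbR)

end Order

section Move

variable {A M B : List WOp} {x : WOp}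

theorem perm_move : (A ++ M ++ x :: B).Perm (A ++ x :: M ++ B) :=
  perm_middle.trans (by simpa using perm_middle.symm)

theorem erase_move (hnd : (A ++ x :: M ++ B).Nodup) :
    (A ++ M ++ x :: B).erase x = (A ++ x :: M ++ B).erase x := by
  have hnd' : (A ++ x :: (M ++ B)).Nodup := by simpa using hnd
  have hx := (nodup_cons.1 (nodup_middle.1 hnd')).1
  simp only [mem_append, not_or] at hx
  rw [erase_append_right _ (by simp [hx.1, hx.2.1]), erase_cons_head,
    show A ++ x :: M ++ B = A ++ x :: (M ++ B) by simp, erase_append_right _ hx.1, erase_cons_head,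
    append_assoc]

theorem wBefore_move_iff {a b : WOp} (hnd : (A ++ x :: M ++ B).Nodup) (ha : a ≠ x) (hb : b ≠ x) :
    WBefore (A ++ M ++ x :: B) a b ↔ WBefore (A ++ x :: M ++ B) a b := by
  rw [← wBefore_erase_iff ha hb, erase_move hnd, wBefore_erase_iff ha hb]

theorem WValid.move (hnd : (A ++ x :: M ++ B).Nodup) (hM : ∀ b ∈ M, b.s ≤ x.f)
    (h : WValid (A ++ x :: M ++ B)) : WValid (A ++ M ++ x :: B) := by
  have hl : A ++ x :: M ++ B = A ++ x :: (M ++ B) := by simp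
  have hnd' : (A ++ M ++ x :: B).Nodup := perm_move.nodup_iff.2 hnd
  intro a ha b hb hab
  have hal := perm_move.subset ha
  have hbl := perm_move.subset hb
  by_cases hax : a = x <;> by_cases hbx : b = x
  · have hxx := h a hal b hbl hab
    rw [hax, hbx] at hxx
    exact absurd hxx (hxx.not_wBefore hnd)
  · subst hax
    have hb' := h a hal b hbl hab
    rw [hl, wBefore_middle_right_iff (hl ▸ hnd)] at hb'
    rcases mem_append.1 hb' with hbM | hbB
    · exact absurd hab (not_lt.2 (hM b hbM))
    · exact (wBefore_middle_right_iff hnd').2 hbB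
  · subst hbx
    have ha' := h a hal b hbl hab
    rw [hl, wBefore_middle_left_iff (hl ▸ hnd)] at ha'
    exact (wBefore_middle_left_iff hnd').2 (mem_append_left M ha')
  · exact (wBefore_move_iff hnd hax hbx).2 (h a hal b hbl hab)

theorem WKAtomicOrder.move {k : ℕ} (hnd : (A ++ x :: M ++ B).Nodup) (hx : x.isRead = false)
    (hxr : ∀ ρ ∈ A ++ x :: M ++ B, ρ.isRead = true → ρ.val ≠ x.val)
    (hMB : ∀ ω ∈ M, ∀ ρ ∈ B, ω.isRead = false → ρ.isRead = true → ω.val ≠ ρ.val)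
    (h : WKAtomicOrder k (A ++ x :: M ++ B)) : WKAtomicOrder k (A ++ M ++ x :: B) := by
  have hl : A ++ x :: M ++ B = A ++ x :: (M ++ B) := by simp
  have hnd' : (A ++ M ++ x :: B).Nodup := perm_move.nodup_iff.2 hnd
  intro ρ hρ hρr ω hω hωr hval
  have hρl := perm_move.subset hρ
  have hωl := perm_move.subset hω
  have hρx : ρ ≠ x := by rintro rfl; simp [hx] at hρr
  have hωx : ω ≠ x := by rintro rfl; exact hxr ρ hρl hρr hval.symm
  obtain ⟨P, Q, R, hPQR, hQ⟩ := h ρ hρl hρr ω hωl hωr hval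
  obtain ⟨P', Q', R', hPQR'⟩ := (wBefore_move_iff hnd hωx hρx).2 ⟨P, Q, R, hPQR⟩
  refine ⟨P', Q', R', hPQR', le_trans (Nat.add_le_add_left ?_ _) hQ⟩
  -- every operation between `ω` and `ρ` in the new order was already between them
  refine writeWeight_le_of_subperm (Nodup.subperm ?_ fun z hz => ?_)
  · exact (hPQR' ▸ hnd').sublist (((sublist_cons_self ω Q').trans (sublist_append_right P' _)).trans
      (sublist_append_left _ _))
  obtain ⟨hωz, hzρ⟩ := (mem_between_iff hnd' hPQR').1 hz
  refine (mem_between_iff hnd hPQR).2 ?_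
  by_cases hzx : z = x
  · subst hzx
    have hωA : ω ∈ A := by
      rcases mem_append.1 ((wBefore_middle_left_iff hnd').1 hωz) with hωA | hωM
      · exact hωA
      · exact absurd hval (hMB ω hωM ρ ((wBefore_middle_right_iff hnd').1 hzρ) hωr hρr)
    rw [hl, wBefore_middle_left_iff (hl ▸ hnd), wBefore_middle_right_iff (hl ▸ hnd)]
    exact ⟨hωA, mem_append_right M ((wBefore_middle_right_iff hnd').1 hzρ)⟩
  · exact ⟨(wBefore_move_iff hnd hωx hzx).1 hωz, (wBefore_move_iff hnd hzx hρx).1 hzρ⟩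

end Move

theorem WValid.start_le_finish_of_mem_between {l A M B : List WOp} {x y : WOp} (hvalid : WValid l)
    (hnd : l.Nodup) (hl : l = A ++ x :: M ++ y :: B) (hyx : y.f < x.f) :
    ∀ b ∈ M ++ [y], b.s ≤ x.f := by
  intro b hb
  by_contra! hxb
  have hyb : WBefore l y b :=
    hvalid y (by simp [hl]) b (by rw [hl]; simp only [mem_append, mem_cons] at hb ⊢; tauto)
      (hyx.trans hxb)
  rcases mem_append.1 hb with hbM | hby
  · refine hyb.not_wBefore hnd ?_
    rw [hl, wBefore_middle_left_iff (hl ▸ hnd)]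
    simp [hbM]
  · obtain rfl := mem_singleton.1 hby
    exact hyb.not_wBefore hnd hyb

section Reduction

variable {n m : ℕ} {sz : Fin n → ℕ}

theorem mem_reduction_iff {x : WOp} :
    x ∈ reduction n m sz ↔
      (∃ t, 1 ≤ t ∧ t ≤ m + 1 ∧ x = shortW t) ∨ (∃ t, 1 ≤ t ∧ t ≤ m ∧ x = readOp t) ∨
        ∃ j, x = longW n m sz j := by
  simp only [reduction, mem_append, mem_map, mem_range'_1, mem_finRange, true_and]
  grind

theorem nodup_reduction : (reduction n m sz).Nodup := by
  have hs : Function.Injective shortW := fun a b h => by simpa [shortW] using congrArg WOp.val h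
  have hr : Function.Injective readOp := fun a b h => by simpa [readOp] using congrArg WOp.val h
  have hl : Function.Injective (longW n m sz) := fun a b h => by
    have := congrArg WOp.val h
    simp only [longW] at this
    exact Fin.ext (by omega)
  refine nodup_append.2 ⟨nodup_append.2 ⟨(nodup_range' ..).map hs, (nodup_range' ..).map hr, ?_⟩,
    (nodup_finRange n).map hl, ?_⟩
  · simp only [mem_map]
    rintro _ ⟨t, -, rfl⟩ _ ⟨u, -, rfl⟩
    simp [shortW, readOp]
  · simp only [mem_append, mem_map, mem_range'_1, mem_finRange, true_and]
    rintro _ (⟨t, ht, rfl⟩ | ⟨t, -, rfl⟩) _ ⟨j, rfl⟩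
    · simp only [shortW, longW, ne_eq, WOp.mk.injEq, not_and]
      omega
    · simp [readOp, longW]

theorem eq_readOp_of_mem_reduction {ρ : WOp} (hρ : ρ ∈ reduction n m sz) (hr : ρ.isRead = true) :
    ∃ t ≤ m, ρ = readOp t := by
  rcases mem_reduction_iff.1 hρ with ⟨t, -, -, rfl⟩ | ⟨t, -, ht, rfl⟩ | ⟨j, rfl⟩
  · simp [shortW] at hr
  · exact ⟨t, ht, rfl⟩
  · simp [longW] at hr

theorem eq_shortW_of_mem_reduction {ω : WOp} (hω : ω ∈ reduction n m sz)
    (hw : ω.isRead = false) (hv : ω.val ≤ m) : ω = shortW ω.val := by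
  rcases mem_reduction_iff.1 hω with ⟨t, -, -, rfl⟩ | ⟨t, -, -, rfl⟩ | ⟨j, rfl⟩
  · rfl
  · simp [readOp] at hw
  · simp only [longW] at hv
    omega

theorem val_ne_longW_of_mem_reduction {ρ : WOp} (hρ : ρ ∈ reduction n m sz)
    (hr : ρ.isRead = true) (j : Fin n) : ρ.val ≠ (longW n m sz j).val := by
  obtain ⟨t, ht, rfl⟩ := eq_readOp_of_mem_reduction hρ hr
  simp only [readOp, longW]
  omega

theorem readOp_f_lt_readOp_s {t u : ℕ} (h : t < u) : (readOp t).f < (readOp u).s := by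
  have : (t : ℚ) + 1 ≤ u := by exact_mod_cast h
  simp only [readOp]
  linarith

theorem readOp_f_lt_shortW_s {t u : ℕ} (h : t + 2 ≤ u) : (readOp t).f < (shortW u).s := by
  have : (t : ℚ) + 2 ≤ u := by exact_mod_cast h
  simp only [readOp, shortW]
  linarith

theorem readOp_f_lt_longW_f {p : ℕ} (hp : p + 1 ≤ m) (j : Fin n) :
    (readOp p).f < (longW n m sz j).f := by
  have hp' : (p : ℚ) + 1 ≤ m := by exact_mod_cast hp
  have hj : (j : ℚ) + 1 ≤ n := by exact_mod_cast j.isLt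
  have hε : ((j : ℚ) + 1) / (2 * n + 5) < 1 / 2 := by
    rw [div_lt_iff₀ (by positivity)]
    linarith
  simp only [readOp, longW]
  linarith

theorem WValid.not_wBefore_readOp_of_shortW_between {l : List WOp} {L : WOp} {p t : ℕ}
    (hvalid : WValid l) (hnd : l.Nodup) (hplace : WBefore l (shortW (p + 1)) L)
    (hLw : WBefore l L (shortW t)) (hwr : WBefore l (shortW t) (readOp p)) :
    ¬WBefore l (readOp p) (readOp t) := by
  intro hrρ
  obtain hlt | rfl | rfl | hge : t < p ∨ t = p ∨ t = p + 1 ∨ p + 2 ≤ t := by omega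
  · exact hrρ.not_wBefore hnd
      (hvalid _ hrρ.mem_right _ hrρ.mem_left (readOp_f_lt_readOp_s hlt))
  · exact hrρ.not_wBefore hnd hrρ
  · exact hplace.not_wBefore hnd hLw
  · exact hwr.not_wBefore hnd (hvalid _ hwr.mem_right _ hwr.mem_left (readOp_f_lt_shortW_s hge))

theorem WValid.val_ne_of_mem_between {l l1 l2 l3 : List WOp} {L : WOp} {p : ℕ}
    (hsub : l ⊆ reduction n m sz) (hvalid : WValid l) (hnd : l.Nodup)
    (hl : l = l1 ++ L :: l2 ++ readOp p :: l3) (hplace : WBefore l (shortW (p + 1)) L) :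
    ∀ ω ∈ l2 ++ [readOp p], ∀ ρ ∈ l3, ω.isRead = false → ρ.isRead = true → ω.val ≠ ρ.val := by
  have hl₁ : l = l1 ++ L :: (l2 ++ readOp p :: l3) := by simp [hl]
  intro ω hω ρ hρ hωw hρr hval
  obtain ⟨t, ht, rfl⟩ := eq_readOp_of_mem_reduction (hsub (by simp [hl, hρ])) hρr
  obtain rfl : ω = shortW t := by
    have hωl : ω ∈ l := by
      rw [hl]; simp only [mem_append, mem_cons] at hω ⊢; tauto
    simpa [hval, readOp] using eq_shortW_of_mem_reduction (hsub hωl) hωw (by simp [hval, readOp, ht])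
  have hω₂ : shortW t ∈ l2 := by simpa [shortW, readOp] using hω
  have hLw : WBefore l L (shortW t) := by
    rw [hl₁, wBefore_middle_right_iff (hl₁ ▸ hnd)]
    simp [hω₂]
  have hwr : WBefore l (shortW t) (readOp p) := by
    rw [hl, wBefore_middle_left_iff (hl ▸ hnd)]
    simp [hω₂]
  have hrρ : WBefore l (readOp p) (readOp t) := by
    rwa [hl, wBefore_middle_right_iff (hl ▸ hnd)]
  exact hvalid.not_wBefore_readOp_of_shortW_between hnd hplace hLw hwr hrρ

end Reduction

theorem stmt_11_general (n m : ℕ) (sz : Fin n → ℕ)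
    (k : ℕ) (l : List WOp) (hperm : l.Perm (reduction n m sz)) (hvalid : WValid l)
    (hatomic : WKAtomicOrder k l)
    (j : Fin n) (i : ℕ) (hi1 : 2 ≤ i) (hi2 : i ≤ m)
    (hplace1 : WBefore l (shortW i) (longW n m sz j))
    (hplace2 : WBefore l (longW n m sz j) (readOp (i - 1))) :
    ∃ l' : List WOp,
      l'.erase (longW n m sz j) = l.erase (longW n m sz j) ∧
      l'.Perm (reduction n m sz) ∧ WValid l' ∧ WKAtomicOrder k l' ∧
      WBefore l' (readOp (i - 1)) (longW n m sz j) ∧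
      WBefore l' (longW n m sz j) (shortW (i + 1)) := by
  obtain ⟨p, rfl⟩ : ∃ p, i = p + 1 := ⟨i - 1, by omega⟩
  rw [Nat.add_sub_cancel] at hplace2 ⊢
  obtain ⟨l1, l2, l3, hl⟩ := hplace2
  have hnd : l.Nodup := hperm.nodup_iff.2 nodup_reduction
  have hlM : l = l1 ++ longW n m sz j :: (l2 ++ [readOp p]) ++ l3 := by simp [hl]
  have hnd' := perm_move.nodup_iff.2 (hlM ▸ hnd)
  have hw : shortW (p + 2) ∈ l :=
    hperm.mem_iff.2 (mem_reduction_iff.2 (Or.inl ⟨p + 2, by omega, by omega, rfl⟩))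
  have hw₃ : shortW (p + 2) ∈ l3 := by
    rw [← wBefore_middle_right_iff (hl ▸ hnd), ← hl]
    exact hvalid _ (by simp [hl]) _ hw (readOp_f_lt_shortW_s le_rfl)
  refine ⟨l1 ++ (l2 ++ [readOp p]) ++ longW n m sz j :: l3, hlM ▸ erase_move (hlM ▸ hnd),
    perm_move.trans (hlM ▸ hperm), ?_, ?_, ⟨l1 ++ l2, [], l3, by simp⟩,
    (wBefore_middle_right_iff hnd').2 hw₃⟩
  · exact (hlM ▸ hvalid).move (hlM ▸ hnd)
      (hvalid.start_le_finish_of_mem_between hnd hl (readOp_f_lt_longW_f hi2 j))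
  · exact (hlM ▸ hatomic).move (hlM ▸ hnd) rfl
      (fun ρ hρ hρr => val_ne_longW_of_mem_reduction (hperm.subset (hlM ▸ hρ)) hρr j)
      (hvalid.val_ne_of_mem_between hperm.subset hnd hl hplace1)

/-- In any weighted-`k`-atomic valid total order for the bin-packing reduction
instance, a long write placed between `w(i)` and `r(i-1)` (for `2 ≤ i ≤ m`) can
be moved to between `r(i-1)` and `w(i+1)`, keeping the total order valid and
weighted-`k`-atomic. -/
theorem stmt_11 (n m B : ℕ) (sz : Fin n → ℕ) (hsz : ∀ i, 0 < sz i) (hm : 1 ≤ m)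
    (k : ℕ) (l : List WOp) (hperm : l.Perm (reduction n m sz)) (hvalid : WValid l)
    (hatomic : WKAtomicOrder k l)
    (j : Fin n) (i : ℕ) (hi1 : 2 ≤ i) (hi2 : i ≤ m)
    (hplace1 : WBefore l (shortW i) (longW n m sz j))
    (hplace2 : WBefore l (longW n m sz j) (readOp (i - 1))) :
    ∃ l' : List WOp,
      l'.erase (longW n m sz j) = l.erase (longW n m sz j) ∧
      l'.Perm (reduction n m sz) ∧ WValid l' ∧ WKAtomicOrder k l' ∧
      WBefore l' (readOp (i - 1)) (longW n m sz j) ∧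
      WBefore l' (longW n m sz j) (shortW (i + 1)) :=
  stmt_11_general n m sz k l hperm hvalid hatomic j i hi1 hi2 hplace1 hplace2
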